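/- Correctness of the CEGAR algorithm with an exact model-counting oracle: let φ_0 = φ and, for i < k, let φ_{i+1} = φ_i ∧ ¬[x_i]_{E_i} for valuations x_i : X → Bool and sets E_i ⊆ X; let n_m be a natural number and x_m ∈ Mod_X(φ) with #_φ(x_m) = n_m. Assume that (i) for each i < k, #_{φ_i}^{E_i}(x_i) ≤ n_m, and (ii) |Mod_Y(φ_k)| ≤ n_m. Then n_m = max_{x ∈ Mod_X(φ)} #_φ(x), i.e., x_m is a solution of the MaxSharpSAT problem for φ. -/

import Mathlib

/-- The set of valuations agreeing with `x` on `E` (the equivalence class `[x]_E`). -/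
def equivClass {X : Type*} (E : Set X) (x : X → Bool) : Set (X → Bool) :=
  {x' | ∀ v ∈ E, x' v = x v}

/-- The induced set `I_φ(x) = {y | ∃ z, φ x y z}`. -/
def induced {X Y Z : Type*} (φ : (X → Bool) → (Y → Bool) → (Z → Bool) → Prop)
    (x : X → Bool) : Set (Y → Bool) :=
  {y | ∃ z, φ x y z}

/-- The induced set of a partial witness, `I_φ^E(x) = ⋃_{x' ∈ [x]_E} I_φ(x')`. -/
def inducedOn {X Y Z : Type*} (φ : (X → Bool) → (Y → Bool) → (Z → Bool) → Prop)
    (E : Set X) (x : X → Bool) : Set (Y → Bool) :=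
  ⋃ x' ∈ equivClass E x, induced φ x'

/-- The count `#_φ(x) = |I_φ(x)|`. -/
noncomputable def mcount {X Y Z : Type*} (φ : (X → Bool) → (Y → Bool) → (Z → Bool) → Prop)
    (x : X → Bool) : ℕ :=
  (induced φ x).ncard

/-- The partial count `#_φ^E(x) = |I_φ^E(x)|`. -/
noncomputable def mcountOn {X Y Z : Type*} (φ : (X → Bool) → (Y → Bool) → (Z → Bool) → Prop)
    (E : Set X) (x : X → Bool) : ℕ :=
  (inducedOn φ E x).ncard

/-- Models projected onto the witness variables `X`. -/
def modX {X Y Z : Type*} (φ : (X → Bool) → (Y → Bool) → (Z → Bool) → Prop) :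
    Set (X → Bool) :=
  {x | ∃ y z, φ x y z}

/-- Models projected onto the counting variables `Y`. -/
def modY {X Y Z : Type*} (φ : (X → Bool) → (Y → Bool) → (Z → Bool) → Prop) :
    Set (Y → Bool) :=
  {y | ∃ x z, φ x y z}

/-!
Blocking `[x_i]_{E_i}` only removes models whose witness lies in that class, so a witness `x`
keeps its whole induced set `I_φ(x)` in every `φ_i` until it is blocked for the first time.
If that happens at step `i`, then `x ∈ [x_i]_{E_i}` and `#_φ(x) = #_{φ_i}(x) ≤ #_{φ_i}^{E_i}(x_i)`;
if it never happens, `I_φ(x) ⊆ Mod_Y(φ_k)`. Either way `#_φ(x) ≤ n_m`, which `x_m` attains.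
-/

section Counting

variable {X Y Z : Type*} (φ : (X → Bool) → (Y → Bool) → (Z → Bool) → Prop)

theorem induced_subset_inducedOn {E : Set X} {x₀ x : X → Bool} (hx : x ∈ equivClass E x₀) :
    induced φ x ⊆ inducedOn φ E x₀ :=
  fun _ hy => Set.mem_biUnion hx hy

theorem induced_subset_modY (x : X → Bool) : induced φ x ⊆ modY φ :=
  fun _ ⟨z, hz⟩ => ⟨x, z, hz⟩

variable [Finite Y]

theorem mcount_le_mcountOn {E : Set X} {x₀ x : X → Bool} (hx : x ∈ equivClass E x₀) :
    mcount φ x ≤ mcountOn φ E x₀ :=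
  Set.ncard_le_ncard (induced_subset_inducedOn φ hx) (Set.toFinite _)

theorem mcount_le_ncard_modY (x : X → Bool) : mcount φ x ≤ (modY φ).ncard :=
  Set.ncard_le_ncard (induced_subset_modY φ x) (Set.toFinite _)

end Counting

section Blocking

variable {X Y Z : Type*} {φ : (X → Bool) → (Y → Bool) → (Z → Bool) → Prop} {k : ℕ}
  {φs : ℕ → (X → Bool) → (Y → Bool) → (Z → Bool) → Prop} {xs : ℕ → X → Bool} {Es : ℕ → Set X}

theorem induced_eq_of_forall_notMem_equivClass (h0 : φs 0 = φ)
    (hstep : ∀ i < k,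
      φs (i + 1) = fun x' y z => φs i x' y z ∧ x' ∉ equivClass (Es i) (xs i))
    {x : X → Bool} : ∀ i ≤ k, (∀ j < i, x ∉ equivClass (Es j) (xs j)) →
      induced (φs i) x = induced φ x
  | 0, _, _ => h0 ▸ rfl
  | i + 1, hik, hfree => by
    have ih := induced_eq_of_forall_notMem_equivClass h0 hstep i (by omega)
      fun j hj => hfree j (by omega)
    rw [hstep i hik, ← ih]
    ext y
    simp only [induced, Set.mem_ofPred_eq, and_iff_left (hfree i (Nat.lt_succ_self i))]

theorem mcount_le_mcountOn_of_first_mem_equivClass [Finite Y] (h0 : φs 0 = φ)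
    (hstep : ∀ i < k,
      φs (i + 1) = fun x' y z => φs i x' y z ∧ x' ∉ equivClass (Es i) (xs i))
    {x : X → Bool} {i : ℕ} (hik : i < k) (hx : x ∈ equivClass (Es i) (xs i))
    (hfirst : ∀ j < i, x ∉ equivClass (Es j) (xs j)) :
    mcount φ x ≤ mcountOn (φs i) (Es i) (xs i) := by
  have hinduced := induced_eq_of_forall_notMem_equivClass h0 hstep i hik.le hfirst
  calc mcount φ x = mcount (φs i) x := by rw [mcount, mcount, hinduced]
    _ ≤ mcountOn (φs i) (Es i) (xs i) := mcount_le_mcountOn _ hx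

theorem mcount_le_ncard_modY_of_forall_notMem_equivClass [Finite Y] (h0 : φs 0 = φ)
    (hstep : ∀ i < k,
      φs (i + 1) = fun x' y z => φs i x' y z ∧ x' ∉ equivClass (Es i) (xs i))
    {x : X → Bool} (hfree : ∀ j < k, x ∉ equivClass (Es j) (xs j)) :
    mcount φ x ≤ (modY (φs k)).ncard := by
  have hinduced := induced_eq_of_forall_notMem_equivClass h0 hstep k le_rfl hfree
  calc mcount φ x = mcount (φs k) x := by rw [mcount, mcount, hinduced]
    _ ≤ (modY (φs k)).ncard := mcount_le_ncard_modY _ x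

end Blocking

theorem cegar_correct_exact_general
    {X Y Z : Type*} [Fintype Y]
    (φ : (X → Bool) → (Y → Bool) → (Z → Bool) → Prop)
    (k : ℕ)
    (φs : ℕ → (X → Bool) → (Y → Bool) → (Z → Bool) → Prop)
    (xs : ℕ → X → Bool) (Es : ℕ → Set X)
    (nm : ℕ) (xm : X → Bool)
    (h0 : φs 0 = φ)
    (hstep : ∀ i < k,
      φs (i + 1) = fun x' y z => φs i x' y z ∧ x' ∉ equivClass (Es i) (xs i))
    (hxm : xm ∈ modX φ) (hnm : mcount φ xm = nm)
    (hbound : ∀ i < k, mcountOn (φs i) (Es i) (xs i) ≤ nm)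
    (hfinal : (modY (φs k)).ncard ≤ nm) :
    IsGreatest ((fun x => mcount φ x) '' modX φ) nm := by
  refine ⟨⟨xm, hxm, hnm⟩, ?_⟩
  rintro _ ⟨x, -, rfl⟩
  by_cases hblocked : ∃ i < k, x ∈ equivClass (Es i) (xs i)
  · classical
    obtain ⟨hik, hx⟩ := Nat.find_spec hblocked
    have hfirst : ∀ j < Nat.find hblocked, x ∉ equivClass (Es j) (xs j) :=
      fun j hj hxj => Nat.find_min hblocked hj ⟨hj.trans hik, hxj⟩
    exact (mcount_le_mcountOn_of_first_mem_equivClass h0 hstep hik hx hfirst).trans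
      (hbound _ hik)
  · push Not at hblocked
    exact (mcount_le_ncard_modY_of_forall_notMem_equivClass h0 hstep hblocked).trans hfinal

theorem cegar_correct_exact
    {X Y Z : Type*} [Fintype X] [Fintype Y] [Fintype Z]
    (φ : (X → Bool) → (Y → Bool) → (Z → Bool) → Prop)
    (k : ℕ)
    (φs : ℕ → (X → Bool) → (Y → Bool) → (Z → Bool) → Prop)
    (xs : ℕ → X → Bool) (Es : ℕ → Set X)
    (nm : ℕ) (xm : X → Bool)
    (h0 : φs 0 = φ)
    (hstep : ∀ i < k,
      φs (i + 1) = fun x' y z => φs i x' y z ∧ x' ∉ equivClass (Es i) (xs i))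
    (hxm : xm ∈ modX φ) (hnm : mcount φ xm = nm)
    (hbound : ∀ i < k, mcountOn (φs i) (Es i) (xs i) ≤ nm)
    (hfinal : (modY (φs k)).ncard ≤ nm) :
    IsGreatest ((fun x => mcount φ x) '' modX φ) nm :=
  cegar_correct_exact_general φ k φs xs Es nm xm h0 hstep hxm hnm hbound hfinal
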